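/- arXiv:2403.04744 — 2 statements merged into one kernel-verified Lean document; each statement's English description precedes it below -/
import Mathlib

section
/- For k ∈ ℕ and x ∈ ℝ^n define the Hermite tensor H_k(x) ∈ (ℝ^n)^{⊗k} by (H_k(x))_{i₁,…,i_k} = (1/√(k!)) Σ_P ⊗_{{a,b}∈P} (−I_{i_a,i_b}) ⊗_{{c}∈P} x_{i_c}, the sum over partitions P of [k] into sets of size 1 and 2. Then for any m < n and any matrix B ∈ ℝ^{m×n} with B B^T = I_m, one has H_k(Bx) = B^{⊗k} H_k(x) for all x ∈ ℝ^n, where B^{⊗k} : (ℝ^n)^{⊗k} → (ℝ^m)^{⊗k} acts coordinatewise by (B^{⊗k} T)_{i₁,…,i_k} = Σ_{j₁,…,j_k} B_{i₁,j₁}⋯B_{i_k,j_k} T_{j₁,…,j_k}. -/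
open Finset


lemma key {k n : ℕ} (π : Equiv.Perm (Fin k)) (hπ : ∀ a, π (π a) = a) (c : Fin k → Fin n → ℝ) :
    ∑ j : Fin k → Fin n, ((∏ a, c a (j a)) *
        ∏ a ∈ univ.filter (fun a => a < π a), (if j a = j (π a) then (1:ℝ) else 0))
      = (∏ a ∈ univ.filter (fun a : Fin k => π a = a), ∑ t, c a t) *
        ∏ a ∈ univ.filter (fun a : Fin k => a < π a), ∑ t, c a t * c (π a) t := by
  classical
  set r : Fin k → Fin k := fun a => if π a < a then π a else a with hr
  have hrval_pos : ∀ a, π a < a → r a = π a := fun a h => if_pos h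
  have hrval_neg : ∀ a, ¬ π a < a → r a = a := fun a h => if_neg h
  have hrR : ∀ a, π (r a) = r a ∨ r a < π (r a) := by
    intro a
    by_cases h : π a < a
    · rw [hrval_pos a h, hπ]; right; exact h
    · rw [hrval_neg a h]
      rcases lt_trichotomy (π a) a with h1 | h1 | h1
      · exact absurd h1 h
      · left; exact h1
      · right; exact h1
  have hrself : ∀ a : Fin k, (π a = a ∨ a < π a) → r a = a := by
    intro a ha
    apply hrval_neg
    rcases ha with h | h
    · rw [h]; exact lt_irrefl a
    · exact fun hc => absurd (hc.trans h) (lt_irrefl _)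
  have hrpi : ∀ a, r (π a) = r a := by
    intro a
    rcases lt_trichotomy (π a) a with h | h | h
    · have h2 : ¬ π (π a) < π a := by rw [hπ]; exact fun hc => absurd (hc.trans h) (lt_irrefl _)
      rw [hrval_neg _ h2, hrval_pos _ h]
    · rw [h]
    · have h2 : π (π a) < π a := by rw [hπ]; exact h
      have h3 : ¬ π a < a := fun hc => absurd (hc.trans h) (lt_irrefl _)
      rw [hrval_pos _ h2, hrval_neg _ h3, hπ]
  set R : Finset (Fin k) := univ.filter (fun a => π a = a ∨ a < π a) with hRdef
  have hrmemR : ∀ a, r a ∈ R := by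
    intro a; rw [hRdef]; exact mem_filter.mpr ⟨mem_univ _, hrR a⟩
  set d : Fin k → Fin n → ℝ := fun a t => if π a = a then c a t else c a t * c (π a) t with hd
  -- Step 1: restrict to invariant j
  have step1 : ∑ j : Fin k → Fin n, ((∏ a, c a (j a)) *
        ∏ a ∈ univ.filter (fun a => a < π a), (if j a = j (π a) then (1:ℝ) else 0))
      = ∑ j ∈ univ.filter (fun j : Fin k → Fin n => ∀ a, j (π a) = j a),
          ((∏ a, c a (j a)) *
        ∏ a ∈ univ.filter (fun a => a < π a), (if j a = j (π a) then (1:ℝ) else 0)) := by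
    rw [Finset.sum_filter_of_ne]
    intro j _ hne a
    by_contra hja
    apply hne
    obtain ⟨b, hbP, hb⟩ : ∃ b, (b < π b) ∧ j b ≠ j (π b) := by
      rcases lt_trichotomy (π a) a with h | h | h
      · exact ⟨π a, by rw [hπ]; exact h, by rw [hπ]; exact hja⟩
      · exact absurd (by rw [h]) hja
      · exact ⟨a, h, fun hc => hja hc.symm⟩
    have hz : (∏ a ∈ univ.filter (fun a => a < π a), (if j a = j (π a) then (1:ℝ) else 0)) = 0 :=
      Finset.prod_eq_zero (Finset.mem_filter.mpr ⟨Finset.mem_univ b, hbP⟩) (if_neg hb)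
    rw [hz, mul_zero]
  -- Step 2: on invariants, the summand is a product over R
  have step2 : ∀ j : Fin k → Fin n, (∀ a, j (π a) = j a) →
      ((∏ a, c a (j a)) *
        ∏ a ∈ univ.filter (fun a => a < π a), (if j a = j (π a) then (1:ℝ) else 0))
      = ∏ a ∈ R, d a (j a) := by
    intro j hj
    have h1 : (∏ a ∈ univ.filter (fun a => a < π a), (if j a = j (π a) then (1:ℝ) else 0)) = 1 := by
      apply Finset.prod_eq_one
      intro a _
      rw [if_pos (hj a).symm]
    rw [h1, mul_one]
    have hsplit : (∏ a, c a (j a)) =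
        (∏ a ∈ R, c a (j a)) * ∏ a ∈ univ.filter (fun a => π a < a), c a (j a) := by
      rw [hRdef, ← Finset.prod_filter_mul_prod_filter_not univ (fun a => π a = a ∨ a < π a)]
      congr 1
      apply Finset.prod_congr _ (fun _ _ => rfl)
      apply Finset.filter_congr
      intro a _
      push_neg
      constructor
      · rintro ⟨h1, h2⟩
        exact h2.lt_of_ne h1
      · intro h
        exact ⟨ne_of_lt h, le_of_lt h⟩
    have hflip : (∏ a ∈ univ.filter (fun a => π a < a), c a (j a))
        = ∏ a ∈ univ.filter (fun a => a < π a), c (π a) (j a) := by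
      apply Finset.prod_nbij' (fun a => π a) (fun a => π a)
      · intro a ha; simp only [mem_filter, mem_univ, true_and] at ha ⊢; rw [hπ]; exact ha
      · intro a ha; simp only [mem_filter, mem_univ, true_and] at ha ⊢; rw [hπ]; exact ha
      · intro a _; exact hπ a
      · intro a _; exact hπ a
      · intro a _; rw [hπ, hj]
    rw [hsplit, hflip]
    have hR2 : R = univ.filter (fun a : Fin k => π a = a) ∪ univ.filter (fun a => a < π a) := by
      rw [hRdef, Finset.filter_or]
    have hdisj : Disjoint (univ.filter (fun a : Fin k => π a = a)) (univ.filter (fun a => a < π a)) := by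
      rw [Finset.disjoint_filter]
      intro a _ h1 h2
      exact absurd (h1 ▸ h2) (lt_irrefl _)
    rw [hR2, Finset.prod_union hdisj, Finset.prod_union hdisj]
    rw [mul_assoc, ← Finset.prod_mul_distrib]
    congr 1
    · apply Finset.prod_congr rfl
      intro a ha
      simp only [mem_filter] at ha
      simp [hd, ha.2]
    · apply Finset.prod_congr rfl
      intro a ha
      simp only [mem_filter] at ha
      have : π a ≠ a := fun hc => absurd (hc ▸ ha.2) (lt_irrefl _)
      simp [hd, this]
  -- Step 3: factor the sum over invariants
  have step3 : ∑ j ∈ univ.filter (fun j : Fin k → Fin n => ∀ a, j (π a) = j a),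
        (∏ a ∈ R, d a (j a))
      = ∏ a ∈ R, ∑ t, d a t := by
    have hprod : (∏ a ∈ R, ∑ t, d a t) = ∏ a : ↥R, ∑ t, d a.1 t := by
      rw [← Finset.prod_coe_sort]
    rw [hprod, Finset.prod_univ_sum (fun _ : ↥R => (univ : Finset (Fin n)))]
    rw [Fintype.piFinset_univ]
    apply Finset.sum_bij' (fun j _ => fun a : ↥R => j a.1)
      (fun g _ => fun a => g ⟨r a, hrmemR a⟩)
    · intro g _; exact mem_univ _
    · intro j hj
      simp only [mem_filter, mem_univ, true_and] at hj ⊢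
      intro a
      have : (⟨r (π a), hrmemR (π a)⟩ : ↥R) = ⟨r a, hrmemR a⟩ := by
        apply Subtype.ext; exact hrpi a
      rw [this]
    · intro j hj
      simp only [mem_filter, mem_univ, true_and] at hj
      funext a
      show j (r a) = j a
      by_cases h : π a < a
      · rw [hrval_pos a h]
        exact hj a
      · rw [hrval_neg a h]
    · intro g _
      funext a
      have hsub : (⟨r a.1, hrmemR a.1⟩ : ↥R) = a :=
        Subtype.ext (hrself a.1 (mem_filter.mp a.2).2)
      show g ⟨r a.1, hrmemR a.1⟩ = g a
      rw [hsub]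
    · intro j hj
      simp only [mem_filter, mem_univ, true_and] at hj
      rw [← Finset.prod_coe_sort]
  -- RHS matches product over R
  have hRHS : (∏ a ∈ univ.filter (fun a : Fin k => π a = a), ∑ t, c a t) *
        ∏ a ∈ univ.filter (fun a : Fin k => a < π a), ∑ t, c a t * c (π a) t
      = ∏ a ∈ R, ∑ t, d a t := by
    have hR2 : R = univ.filter (fun a : Fin k => π a = a) ∪ univ.filter (fun a => a < π a) := by
      rw [hRdef, Finset.filter_or]
    have hdisj : Disjoint (univ.filter (fun a : Fin k => π a = a)) (univ.filter (fun a => a < π a)) := by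
      rw [Finset.disjoint_filter]
      intro a _ h1 h2
      exact absurd (h1 ▸ h2) (lt_irrefl _)
    rw [hR2, Finset.prod_union hdisj]
    congr 1
    · apply Finset.prod_congr rfl
      intro a ha
      simp only [mem_filter] at ha
      simp [hd, ha.2]
    · apply Finset.prod_congr rfl
      intro a ha
      simp only [mem_filter] at ha
      have : π a ≠ a := fun hc => absurd (hc ▸ ha.2) (lt_irrefl _)
      simp [hd, this]
  rw [step1, hRHS, ← step3]
  apply Finset.sum_congr rfl
  intro j hj
  simp only [mem_filter, mem_univ, true_and] at hj
  exact step2 j hj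

lemma prod_neg_aux {k : ℕ} (s : Finset (Fin k)) (f : Fin k → ℝ) :
    ∏ a ∈ s, -(f a) = (-1) ^ s.card * ∏ a ∈ s, f a := by
  calc ∏ a ∈ s, -(f a) = ∏ a ∈ s, ((-1 : ℝ) * f a) := by
        apply Finset.prod_congr rfl; intro a _; rw [neg_one_mul]
    _ = _ := by rw [Finset.prod_mul_distrib, Finset.prod_const]


/-- Entry (i₁,…,i_k) of the k-th Hermite tensor H_k(x) in n dimensions:
(1/√(k!)) Σ_P ⊗_{{a,b}∈P}(−I_{i_a,i_b}) ⊗_{{c}∈P} x_{i_c}, where P ranges over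
partitions of [k] into sets of size 1 and 2 (encoded as involutions of Fin k:
pairs are the 2-cycles, singletons the fixed points). -/
noncomputable def hermiteEntry (n k : ℕ) (x : Fin n → ℝ) (i : Fin k → Fin n) : ℝ :=
  (Real.sqrt (Nat.factorial k))⁻¹ *
    ∑ π ∈ Finset.univ.filter (fun π : Equiv.Perm (Fin k) => π * π = 1),
      (∏ a ∈ Finset.univ.filter (fun a : Fin k => π a = a), x (i a)) *
      (∏ a ∈ Finset.univ.filter (fun a : Fin k => a < π a),
        -(if i a = i (π a) then (1 : ℝ) else 0))

/-- For B ∈ ℝ^{m×n} with B Bᵀ = I_m (m < n), H_k(Bx) = B^{⊗k} H_k(x),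
i.e. entrywise (H_k(Bx))_{i₁,…,i_k} = Σ_{j₁,…,j_k} B_{i₁j₁}⋯B_{i_kj_k}(H_k(x))_{j₁,…,j_k}. -/
theorem stmt8 (n m k : ℕ) (hmn : m < n) (B : Fin m → Fin n → ℝ)
    (hB : ∀ i i' : Fin m, ∑ j : Fin n, B i j * B i' j = if i = i' then 1 else 0)
    (x : Fin n → ℝ) (i : Fin k → Fin m) :
    hermiteEntry m k (fun l => ∑ j : Fin n, B l j * x j) i
      = ∑ j : Fin k → Fin n, (∏ a : Fin k, B (i a) (j a)) * hermiteEntry n k x j := by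
  classical
  set s : ℝ := (Real.sqrt (Nat.factorial k))⁻¹ with hs
  have core : ∀ π : Equiv.Perm (Fin k), π * π = 1 →
      (∏ a ∈ univ.filter (fun a : Fin k => π a = a), (∑ t, B (i a) t * x t)) *
      (∏ a ∈ univ.filter (fun a : Fin k => a < π a), -(if i a = i (π a) then (1:ℝ) else 0))
      = ∑ j : Fin k → Fin n, (∏ a, B (i a) (j a)) *
          ((∏ a ∈ univ.filter (fun a : Fin k => π a = a), x (j a)) *
           (∏ a ∈ univ.filter (fun a : Fin k => a < π a),
             -(if j a = j (π a) then (1:ℝ) else 0))) := by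
    intro π hπ1
    have hπ : ∀ a, π (π a) = a := by
      intro a
      have := congrArg (fun σ : Equiv.Perm (Fin k) => σ a) hπ1
      simpa [Equiv.Perm.mul_apply] using this
    set c : Fin k → Fin n → ℝ := fun a t => B (i a) t * (if π a = a then x t else 1) with hc
    have hkey := key π hπ c
    have hfix : (∏ a ∈ univ.filter (fun a : Fin k => π a = a), ∑ t, c a t)
        = ∏ a ∈ univ.filter (fun a : Fin k => π a = a), ∑ t, B (i a) t * x t := by
      apply Finset.prod_congr rfl
      intro a ha
      apply Finset.sum_congr rfl
      intro t _
      simp [hc, (mem_filter.mp ha).2]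
    have hpair : (∏ a ∈ univ.filter (fun a : Fin k => a < π a), ∑ t, c a t * c (π a) t)
        = ∏ a ∈ univ.filter (fun a : Fin k => a < π a), (if i a = i (π a) then (1:ℝ) else 0) := by
      apply Finset.prod_congr rfl
      intro a ha
      have hlt : a < π a := (mem_filter.mp ha).2
      have h1 : π a ≠ a := fun hcon => absurd (hcon ▸ hlt) (lt_irrefl _)
      have h2 : π (π a) ≠ π a := by rw [hπ]; exact ne_of_lt hlt
      calc ∑ t, c a t * c (π a) t = ∑ t, B (i a) t * B (i (π a)) t := by
            apply Finset.sum_congr rfl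
            intro t _
            simp [hc, if_neg h1, if_neg h2]
        _ = if i a = i (π a) then 1 else 0 := hB (i a) (i (π a))
    have hprodc : ∀ j : Fin k → Fin n, (∏ a, c a (j a))
        = (∏ a, B (i a) (j a)) * ∏ a ∈ univ.filter (fun a : Fin k => π a = a), x (j a) := by
      intro j
      calc (∏ a, c a (j a))
          = (∏ a, B (i a) (j a) * if π a = a then x (j a) else 1) := rfl
        _ = (∏ a, B (i a) (j a)) * ∏ a : Fin k, (if π a = a then x (j a) else 1) :=
            Finset.prod_mul_distrib
        _ = _ := by rw [← Finset.prod_filter]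
    set p := (univ.filter (fun a : Fin k => a < π a)).card with hp
    calc (∏ a ∈ univ.filter (fun a : Fin k => π a = a), (∑ t, B (i a) t * x t)) *
        (∏ a ∈ univ.filter (fun a : Fin k => a < π a), -(if i a = i (π a) then (1:ℝ) else 0))
        = (∏ a ∈ univ.filter (fun a : Fin k => π a = a), (∑ t, B (i a) t * x t)) *
          ((-1)^p * ∏ a ∈ univ.filter (fun a : Fin k => a < π a),
            (if i a = i (π a) then (1:ℝ) else 0)) := by rw [prod_neg_aux]
      _ = (-1)^p * ((∏ a ∈ univ.filter (fun a : Fin k => π a = a), ∑ t, c a t) *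
            ∏ a ∈ univ.filter (fun a : Fin k => a < π a), ∑ t, c a t * c (π a) t) := by
            rw [hfix, hpair]; ring
      _ = (-1)^p * ∑ j : Fin k → Fin n, ((∏ a, c a (j a)) *
            ∏ a ∈ univ.filter (fun a : Fin k => a < π a),
              (if j a = j (π a) then (1:ℝ) else 0)) := by rw [hkey]
      _ = ∑ j : Fin k → Fin n, (-1)^p * ((∏ a, c a (j a)) *
            ∏ a ∈ univ.filter (fun a : Fin k => a < π a),
              (if j a = j (π a) then (1:ℝ) else 0)) := Finset.mul_sum _ _ _
      _ = _ := by
            apply Finset.sum_congr rfl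
            intro j _
            rw [prod_neg_aux, hprodc j]
            ring
  have main : ∀ π : Equiv.Perm (Fin k), π * π = 1 →
      s * ((∏ a ∈ univ.filter (fun a : Fin k => π a = a), (∑ t, B (i a) t * x t)) *
      (∏ a ∈ univ.filter (fun a : Fin k => a < π a), -(if i a = i (π a) then (1:ℝ) else 0)))
      = ∑ j : Fin k → Fin n, (∏ a, B (i a) (j a)) *
          (s * ((∏ a ∈ univ.filter (fun a : Fin k => π a = a), x (j a)) *
           (∏ a ∈ univ.filter (fun a : Fin k => a < π a),
             -(if j a = j (π a) then (1:ℝ) else 0)))) := by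
    intro π hπ1
    rw [core π hπ1, Finset.mul_sum]
    apply Finset.sum_congr rfl
    intro j _
    ring
  simp only [hermiteEntry, ← hs, Finset.mul_sum]
  conv_rhs => rw [Finset.sum_comm]
  apply Finset.sum_congr rfl
  intro π hπmem
  exact main π (mem_filter.mp hπmem).2
end

section
/- Let k be a positive integer, a an even positive integer, m < n positive integers, and T ∈ (ℝ^n)^{⊗k} a k-tensor. Then there exists a unit vector u ∈ S^{n−1} such that E_{V∼U(O_{n,m})}[‖(V^T)^{⊗k} T‖₂^a] ≤ E_{V∼U(O_{n,m})}[‖V^T u‖₂^{ak/2}] · ‖T‖₂^a, where U(O_{n,m}) is the rotation-invariant distribution on n×m matrices with orthonormal columns. -/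
/-!
Write `a = 2r`. Then `‖(Vᵀ)^{⊗k} T‖^a = ‖(Vᵀ)^{⊗rk} T^{⊗r}‖²`, so it suffices to treat `a = 2`
for a tensor `S` of arbitrary order `p`. Its expectation is the quadratic form of the moment
operator `A = E[(V Vᵀ)^{⊗p}]`, which is at most `λ ‖S‖²` for the top eigenvalue `λ` with
eigenvector `t`. Take unit vectors `u_1, …, u_p` maximising `|⟨t, u_1 ⊗ ⋯ ⊗ u_p⟩|`; by
multilinearity `|⟨t, v_1 ⊗ ⋯ ⊗ v_p⟩| ≤ ∏ ‖v_b‖ · |⟨t, ⊗ u_b⟩|`. Testing `A t = λ t` against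
`⊗ u_b` and using `‖V Vᵀ u‖ = ‖Vᵀ u‖` gives `λ ≤ E[∏_b ‖Vᵀ u_b‖]`, and by AM-GM this is at most
`E[‖Vᵀ u_b‖^p]` for the best `b`.
-/

open MeasureTheory Matrix

section DotProduct

variable {N : Type*} [Fintype N]

theorem sum_sq_eq_dotProduct_self (v : N → ℝ) : ∑ x, v x ^ 2 = v ⬝ᵥ v := by
  simp only [dotProduct, sq]

theorem dotProduct_self_nonneg (v : N → ℝ) : 0 ≤ v ⬝ᵥ v :=
  Finset.sum_nonneg fun _ _ => mul_self_nonneg _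

theorem sq_le_dotProduct_self (v : N → ℝ) (x : N) : v x ^ 2 ≤ v ⬝ᵥ v := by
  rw [sq]
  exact Finset.single_le_sum (f := fun y => v y * v y) (fun y _ => mul_self_nonneg _)
    (Finset.mem_univ x)

theorem abs_le_one_of_dotProduct_self_eq_one {v : N → ℝ} (hv : v ⬝ᵥ v = 1) (x : N) :
    |v x| ≤ 1 := by
  rw [← sq_le_one_iff_abs_le_one, ← hv]
  exact sq_le_dotProduct_self v x

theorem isCompact_setOf_dotProduct_self_eq_one : IsCompact {v : N → ℝ | v ⬝ᵥ v = 1} := by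
  refine Metric.isCompact_of_isClosed_isBounded
    (isClosed_eq (by fun_prop) continuous_const) ?_
  refine (Metric.isBounded_closedBall (x := 0) (r := 1)).subset fun v hv => ?_
  rw [mem_closedBall_zero_iff, pi_norm_le_iff_of_nonneg zero_le_one]
  exact abs_le_one_of_dotProduct_self_eq_one hv

theorem exists_dotProduct_self_eq_one_smul [Nonempty N] (v : N → ℝ) :
    ∃ w : N → ℝ, w ⬝ᵥ w = 1 ∧ v = √(v ⬝ᵥ v) • w := by
  classical
  rcases eq_or_ne v 0 with rfl | hv
  · obtain ⟨x⟩ := ‹Nonempty N›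
    exact ⟨Pi.single x 1, by simp, by simp⟩
  · have hvv : 0 < v ⬝ᵥ v :=
      (dotProduct_self_nonneg v).lt_of_ne' (dotProduct_self_eq_zero.not.mpr hv)
    have hpos : 0 < √(v ⬝ᵥ v) := Real.sqrt_pos.mpr hvv
    refine ⟨(√(v ⬝ᵥ v))⁻¹ • v, ?_, by rw [smul_smul, mul_inv_cancel₀ hpos.ne', one_smul]⟩
    rw [smul_dotProduct, dotProduct_smul, smul_eq_mul, smul_eq_mul, ← mul_assoc, ← mul_inv,
      Real.mul_self_sqrt hvv.le, inv_mul_cancel₀ hvv.ne']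

end DotProduct

namespace Matrix

variable {R : Type*} [CommSemiring R] {ι M N P : Type*} [Fintype ι]

/-- `K^{⊗ι}`; the paper's `(Vᵀ)^{⊗k} T` is `piKronecker (of V)ᵀ *ᵥ T`. -/
def piKronecker (K : Matrix M N R) : Matrix (ι → M) (ι → N) R :=
  of fun J J' => ∏ b, K (J b) (J' b)

def pureTensor (u : ι → N → R) : (ι → N) → R := fun J => ∏ b, u b (J b)

theorem piKronecker_transpose (K : Matrix M N R) :
    (piKronecker K : Matrix (ι → M) (ι → N) R)ᵀ = piKronecker Kᵀ := rfl

theorem pureTensor_smul (c : ι → R) (v : ι → N → R) :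
    pureTensor (fun b => c b • v b) = (∏ b, c b) • pureTensor v := by
  ext J
  simp [pureTensor, Finset.prod_mul_distrib]

theorem pureTensor_single [DecidableEq N] (J : ι → N) :
    pureTensor (fun b => Pi.single (J b) (1 : R)) = Pi.single J 1 := by
  ext J'
  simp [pureTensor, Pi.single_apply, Finset.prod_ite_zero, funext_iff]

variable [DecidableEq ι] [Fintype N]

theorem piKronecker_mul (A : Matrix M N R) (B : Matrix N P R) :
    (piKronecker (A * B) : Matrix (ι → M) (ι → P) R)
      = (piKronecker A : Matrix (ι → M) (ι → N) R)
        * (piKronecker B : Matrix (ι → N) (ι → P) R) := by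
  ext J J''
  simp only [piKronecker, mul_apply, of_apply, Fintype.prod_sum, Finset.prod_mul_distrib]

theorem piKronecker_mulVec_pureTensor (K : Matrix M N R) (u : ι → N → R) :
    piKronecker K *ᵥ pureTensor u = pureTensor fun b => K *ᵥ u b := by
  ext J
  simp only [pureTensor, piKronecker, mulVec, dotProduct, of_apply, Fintype.prod_sum,
    Finset.prod_mul_distrib]

theorem pureTensor_dotProduct_piKronecker_mulVec (K : Matrix N N R) (u : ι → N → R)
    (t : (ι → N) → R) :
    pureTensor u ⬝ᵥ (piKronecker K *ᵥ t) = pureTensor (fun b => Kᵀ *ᵥ u b) ⬝ᵥ t := by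
  rw [dotProduct_mulVec, ← mulVec_transpose, piKronecker_transpose,
    piKronecker_mulVec_pureTensor]

end Matrix

section TensorPow

variable {R : Type*} [CommSemiring R] {ι κ N : Type*} [Fintype ι] [DecidableEq ι]
  [Fintype κ] [DecidableEq κ] [Fintype N]

theorem sum_prod_curry (f : ι → (κ → N) → R) :
    ∑ J : ι × κ → N, ∏ c, f c (fun d => J (c, d)) = ∏ c, ∑ j, f c j := by
  rw [Fintype.prod_sum]
  exact Fintype.sum_equiv (Equiv.curry ι κ N) _ _ fun _ => rfl

def tensorPow (ι : Type*) [Fintype ι] (T : (κ → N) → R) : (ι × κ → N) → R :=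
  fun J => ∏ c : ι, T fun d => J (c, d)

theorem tensorPow_dotProduct_tensorPow (T T' : (κ → N) → R) :
    tensorPow ι T ⬝ᵥ tensorPow ι T' = (T ⬝ᵥ T') ^ Fintype.card ι := by
  simp only [dotProduct, tensorPow, ← Finset.prod_mul_distrib]
  rw [sum_prod_curry fun _ j => T j * T' j, Finset.prod_const, Finset.card_univ]

theorem piKronecker_mulVec_tensorPow {M : Type*} (K : Matrix M N R) (T : (κ → N) → R) :
    piKronecker K *ᵥ tensorPow ι T = tensorPow ι (piKronecker K *ᵥ T) := by
  ext I
  simp only [tensorPow, piKronecker, mulVec, dotProduct, of_apply, Fintype.prod_prod_type]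
  rw [← sum_prod_curry]
  simp only [Finset.prod_mul_distrib]

end TensorPow

theorem tensorPow_fin_dotProduct_self {κ N : Type*} [Fintype κ] [DecidableEq κ] [Fintype N]
    (r : ℕ) (T : (κ → N) → ℝ) :
    tensorPow (Fin r) T ⬝ᵥ tensorPow (Fin r) T = √(T ⬝ᵥ T) ^ (r + r) := by
  rw [tensorPow_dotProduct_tensorPow, Fintype.card_fin, ← two_mul, pow_mul,
    Real.sq_sqrt (dotProduct_self_nonneg T)]

theorem Real.prod_le_inv_card_mul_sum_pow {ι : Type*} [Fintype ι] [Nonempty ι] {x : ι → ℝ}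
    (hx : ∀ b, 0 ≤ x b) :
    ∏ b, x b ≤ (Fintype.card ι : ℝ)⁻¹ * ∑ b, x b ^ Fintype.card ι := by
  have hp : (Fintype.card ι : ℝ) ≠ 0 := Nat.cast_ne_zero.mpr Fintype.card_ne_zero
  have amgm := Real.geom_mean_le_arith_mean_weighted Finset.univ
    (fun _ => (Fintype.card ι : ℝ)⁻¹) (fun b => x b ^ Fintype.card ι) (fun _ _ => by positivity)
    (by simp [Finset.card_univ, hp]) (fun b _ => pow_nonneg (hx b) _)
  simp only [Real.pow_rpow_inv_natCast (hx _) Fintype.card_ne_zero] at amgm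
  rwa [Finset.mul_sum]

theorem exists_integral_prod_le_integral_pow {X ι : Type*} [MeasurableSpace X] {μ : Measure X}
    [Fintype ι] [Nonempty ι] {f : ι → X → ℝ} (hf : ∀ b x, 0 ≤ f b x)
    (hprod : Integrable (fun x => ∏ b, f b x) μ)
    (hpow : ∀ b, Integrable (fun x => f b x ^ Fintype.card ι) μ) :
    ∃ b, ∫ x, ∏ b, f b x ∂μ ≤ ∫ x, f b x ^ Fintype.card ι ∂μ := by
  obtain ⟨b₀, -, hb₀⟩ := Finset.exists_max_image Finset.univ
    (fun b => ∫ x, f b x ^ Fintype.card ι ∂μ) Finset.univ_nonempty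
  refine ⟨b₀, ?_⟩
  have hp : (0 : ℝ) < Fintype.card ι := Nat.cast_pos.mpr Fintype.card_pos
  calc ∫ x, ∏ b, f b x ∂μ
      ≤ ∫ x, (Fintype.card ι : ℝ)⁻¹ * ∑ b, f b x ^ Fintype.card ι ∂μ :=
        integral_mono hprod ((integrable_finsetSum _ fun b _ => hpow b).const_mul _)
          fun x => Real.prod_le_inv_card_mul_sum_pow fun b => hf b x
    _ = (Fintype.card ι : ℝ)⁻¹ * ∑ b, ∫ x, f b x ^ Fintype.card ι ∂μ := by
        rw [integral_const_mul, integral_finsetSum _ fun b _ => hpow b]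
    _ ≤ (Fintype.card ι : ℝ)⁻¹ * ∑ _b : ι, ∫ x, f b₀ x ^ Fintype.card ι ∂μ :=
        mul_le_mul_of_nonneg_left (Finset.sum_le_sum fun b _ => hb₀ b (Finset.mem_univ b))
          (by positivity)
    _ = ∫ x, f b₀ x ^ Fintype.card ι ∂μ := by
        rw [Finset.sum_const, Finset.card_univ, nsmul_eq_mul, inv_mul_cancel_left₀ hp.ne']

theorem Matrix.IsHermitian.exists_eigenvector_forall_dotProduct_mulVec_le {ι : Type*}
    [Fintype ι] [DecidableEq ι] [Nonempty ι] {A : Matrix ι ι ℝ} (hA : A.IsHermitian) :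
    ∃ lam : ℝ, ∃ t ≠ 0, A *ᵥ t = lam • t ∧ ∀ S, S ⬝ᵥ (A *ᵥ S) ≤ lam * (S ⬝ᵥ S) := by
  set T := toEuclideanLin A
  have hT : T.IsSymmetric := isSymmetric_toEuclideanLin_iff.mpr hA
  obtain ⟨t, ht⟩ := hT.hasEigenvalue_iSup_of_finiteDimensional.exists_hasEigenvector
  refine ⟨_, WithLp.ofLp t, by simpa using ht.2, congrArg WithLp.ofLp ht.apply_eq_smul, ?_⟩
  intro S
  rcases eq_or_ne S 0 with rfl | hS
  · simp
  have hquot_le_norm : ∀ x : EuclideanSpace ℝ ι,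
      RCLike.re (inner ℝ (T x) x) / ‖x‖ ^ 2 ≤ ‖LinearMap.toContinuousLinearMap T‖ := fun x =>
    (le_abs_self _).trans ((LinearMap.toContinuousLinearMap T).rayleighQuotient_le_norm x)
  have hle := le_ciSup (f := fun x : {x : EuclideanSpace ℝ ι // x ≠ 0} =>
      RCLike.re (inner ℝ (T x) x) / ‖(x : EuclideanSpace ℝ ι)‖ ^ 2)
    ⟨_, Set.forall_mem_range.mpr fun x => hquot_le_norm x⟩ ⟨WithLp.toLp 2 S, by simpa using hS⟩
  have hnorm : ‖WithLp.toLp 2 S‖ ^ 2 = S ⬝ᵥ S := by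
    rw [← real_inner_self_eq_norm_sq, EuclideanSpace.inner_toLp_toLp, star_trivial]
  have hpos : 0 < S ⬝ᵥ S := by
    rw [← hnorm]
    exact pow_pos (norm_pos_iff.mpr (by simpa using hS)) 2
  have hinner :
      RCLike.re (inner ℝ (T (WithLp.toLp 2 S)) (WithLp.toLp 2 S)) = S ⬝ᵥ (A *ᵥ S) := by
    simp [T, EuclideanSpace.inner_toLp_toLp]
  rw [hinner, hnorm, div_le_iff₀ hpos] at hle
  simpa only [RCLike.ofReal_real_eq_id, id_eq] using hle

theorem exists_forall_abs_pureTensor_dotProduct_le {ι N : Type*} [Fintype ι] [DecidableEq ι]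
    [Fintype N] [Nonempty N] {t : (ι → N) → ℝ} (ht : t ≠ 0) :
    ∃ u : ι → N → ℝ, (∀ b, u b ⬝ᵥ u b = 1) ∧ pureTensor u ⬝ᵥ t ≠ 0 ∧
      ∀ v : ι → N → ℝ, |pureTensor v ⬝ᵥ t| ≤ (∏ b, √(v b ⬝ᵥ v b)) * |pureTensor u ⬝ᵥ t| := by
  classical
  set K := Set.univ.pi fun _ : ι => {w : N → ℝ | w ⬝ᵥ w = 1}
  have hK : IsCompact K := isCompact_univ_pi fun _ => isCompact_setOf_dotProduct_self_eq_one
  have hsingle : ∀ J : ι → N, (fun b => Pi.single (J b) (1 : ℝ)) ∈ K := fun J b _ => by simp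
  have hcont : Continuous fun v : ι → N → ℝ => |pureTensor v ⬝ᵥ t| := by
    simp only [pureTensor, dotProduct]
    fun_prop
  obtain ⟨J₀⟩ : Nonempty (ι → N) := inferInstance
  obtain ⟨u, hu, hmax⟩ := hK.exists_isMaxOn ⟨_, hsingle J₀⟩ hcont.continuousOn
  have hmax' : ∀ v ∈ K, |pureTensor v ⬝ᵥ t| ≤ |pureTensor u ⬝ᵥ t| := fun v hv => hmax hv
  refine ⟨u, fun b => hu b (Set.mem_univ b), ?_, fun v => ?_⟩
  · obtain ⟨J, hJ⟩ := Function.ne_iff.mp ht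
    have hJle := hmax' _ (hsingle J)
    rw [pureTensor_single, single_dotProduct, one_mul] at hJle
    exact abs_pos.mp ((abs_pos.mpr hJ).trans_le hJle)
  · choose w hw hvw using fun b => exists_dotProduct_self_eq_one_smul (v b)
    have hnonneg : 0 ≤ ∏ b, √(v b ⬝ᵥ v b) := Finset.prod_nonneg fun b _ => Real.sqrt_nonneg _
    calc |pureTensor v ⬝ᵥ t| = (∏ b, √(v b ⬝ᵥ v b)) * |pureTensor w ⬝ᵥ t| := by
          conv_lhs => rw [show v = fun b => √(v b ⬝ᵥ v b) • w b from funext hvw]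
          rw [pureTensor_smul, smul_dotProduct, smul_eq_mul, abs_mul, abs_of_nonneg hnonneg]
      _ ≤ (∏ b, √(v b ⬝ᵥ v b)) * |pureTensor u ⬝ᵥ t| :=
          mul_le_mul_of_nonneg_left (hmax' w fun b _ => hw b) hnonneg

def stiefel (N M : Type*) [Fintype N] [DecidableEq M] : Set (N → M → ℝ) :=
  {V | (of V)ᵀ * of V = 1}

section Stiefel

variable {N M : Type*} [Fintype N] [Fintype M] [DecidableEq M]

theorem isCompact_stiefel : IsCompact (stiefel N M) := by
  refine Metric.isCompact_of_isClosed_isBounded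
    (isClosed_eq (by fun_prop) continuous_const) ?_
  refine (Metric.isBounded_closedBall (x := 0) (r := 1)).subset fun V hV => ?_
  simp only [mem_closedBall_zero_iff, pi_norm_le_iff_of_nonneg zero_le_one]
  intro x i
  refine abs_le_one_of_dotProduct_self_eq_one (v := fun y => V y i) ?_ x
  have hii := congrFun (congrFun hV i) i
  rwa [mul_apply, one_apply_eq] at hii

theorem mulVec_dotProduct_mulVec_of_mem_stiefel {V : N → M → ℝ} (hV : V ∈ stiefel N M)
    (w : M → ℝ) : (of V *ᵥ w) ⬝ᵥ (of V *ᵥ w) = w ⬝ᵥ w := by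
  rw [dotProduct_mulVec, ← mulVec_transpose, mulVec_mulVec, dotProduct_comm]
  rw [show (of V)ᵀ * of V = 1 from hV, one_mulVec]

end Stiefel

theorem Continuous.integrable_of_ae_mem_isCompact {X : Type*} [TopologicalSpace X] [T2Space X]
    [MeasurableSpace X] [OpensMeasurableSpace X] {μ : Measure X} [IsFiniteMeasure μ]
    {K : Set X} {f : X → ℝ} (hf : Continuous f) (hK : IsCompact K) (hμ : ∀ᵐ x ∂μ, x ∈ K) :
    Integrable f μ := by
  rw [← Measure.restrict_eq_self_of_ae_mem hμ]
  exact hf.continuousOn.integrableOn_compact hK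

theorem integral_dotProduct_mulVec {X κ κ' : Type*} [MeasurableSpace X] {μ : Measure X}
    [Fintype κ] [Fintype κ'] {K : X → Matrix κ κ' ℝ}
    (hK : ∀ J J', Integrable (fun x => K x J J') μ) (v : κ → ℝ) (w : κ' → ℝ) :
    ∫ x, v ⬝ᵥ (K x *ᵥ w) ∂μ = v ⬝ᵥ (of (fun J J' => ∫ x, K x J J' ∂μ) *ᵥ w) := by
  simp only [dotProduct, mulVec, of_apply, Finset.mul_sum]
  rw [integral_finsetSum _ fun J _ => integrable_finsetSum _ fun J' _ =>
    ((hK J J').mul_const _).const_mul _]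
  refine Finset.sum_congr rfl fun J _ => ?_
  rw [integral_finsetSum _ fun J' _ => ((hK J J').mul_const _).const_mul _]
  simp only [integral_const_mul, integral_mul_const]

section MomentOperator

variable {N M : Type*} [Fintype M] (ι : Type*) [Fintype ι] (μ : Measure (N → M → ℝ))

noncomputable def momentOperator : Matrix (ι → N) (ι → N) ℝ :=
  of fun J J' => ∫ V, piKronecker (of V * (of V)ᵀ) J J' ∂μ

theorem momentOperator_isHermitian : (momentOperator ι μ).IsHermitian := by
  ext J J'
  simp [momentOperator, piKronecker, mul_apply, mul_comm]

variable {μ} [Fintype N] [DecidableEq M] [IsFiniteMeasure μ]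

theorem integrable_piKronecker_mul_transpose_apply (hμ : ∀ᵐ V ∂μ, V ∈ stiefel N M)
    (J J' : ι → N) : Integrable (fun V => piKronecker (of V * (of V)ᵀ) J J') μ := by
  refine Continuous.integrable_of_ae_mem_isCompact ?_ isCompact_stiefel hμ
  simp only [piKronecker, of_apply, mul_apply, transpose_apply]
  fun_prop

variable [DecidableEq ι]

theorem dotProduct_momentOperator_mulVec (hμ : ∀ᵐ V ∂μ, V ∈ stiefel N M) (S : (ι → N) → ℝ) :
    S ⬝ᵥ (momentOperator ι μ *ᵥ S)
      = ∫ V, (piKronecker (of V)ᵀ *ᵥ S) ⬝ᵥ (piKronecker (of V)ᵀ *ᵥ S) ∂μ := by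
  rw [momentOperator, ← integral_dotProduct_mulVec
    (integrable_piKronecker_mul_transpose_apply ι hμ)]
  refine integral_congr_ae (.of_forall fun V => ?_)
  dsimp only
  rw [piKronecker_mul, ← mulVec_mulVec, dotProduct_mulVec, ← mulVec_transpose,
    piKronecker_transpose]

theorem pureTensor_dotProduct_momentOperator_mulVec (hμ : ∀ᵐ V ∂μ, V ∈ stiefel N M)
    (u : ι → N → ℝ) (t : (ι → N) → ℝ) :
    pureTensor u ⬝ᵥ (momentOperator ι μ *ᵥ t)
      = ∫ V, pureTensor (fun b => of V *ᵥ ((of V)ᵀ *ᵥ u b)) ⬝ᵥ t ∂μ := by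
  rw [momentOperator, ← integral_dotProduct_mulVec
    (integrable_piKronecker_mul_transpose_apply ι hμ)]
  refine integral_congr_ae (.of_forall fun V => ?_)
  dsimp only
  simp only [pureTensor_dotProduct_piKronecker_mulVec, transpose_mul, transpose_transpose,
    mulVec_mulVec]

theorem abs_pureTensor_dotProduct_momentOperator_mulVec_le (hμ : ∀ᵐ V ∂μ, V ∈ stiefel N M)
    {u : ι → N → ℝ} {t : (ι → N) → ℝ}
    (hu : ∀ v : ι → N → ℝ, |pureTensor v ⬝ᵥ t| ≤ (∏ b, √(v b ⬝ᵥ v b)) * |pureTensor u ⬝ᵥ t|) :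
    |pureTensor u ⬝ᵥ (momentOperator ι μ *ᵥ t)|
      ≤ (∫ V, ∏ b, √(((of V)ᵀ *ᵥ u b) ⬝ᵥ ((of V)ᵀ *ᵥ u b)) ∂μ) * |pureTensor u ⬝ᵥ t| := by
  rw [pureTensor_dotProduct_momentOperator_mulVec ι hμ, ← integral_mul_const]
  refine (abs_integral_le_integral_abs).trans (integral_mono_ae ?_ ?_ ?_)
  · refine Continuous.integrable_of_ae_mem_isCompact ?_ isCompact_stiefel hμ
    simp only [pureTensor, dotProduct, mulVec]
    fun_prop
  · refine Continuous.integrable_of_ae_mem_isCompact ?_ isCompact_stiefel hμ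
    simp only [dotProduct, mulVec]
    fun_prop
  · filter_upwards [hμ] with V hV
    simpa only [mulVec_dotProduct_mulVec_of_mem_stiefel hV] using
      hu fun b => of V *ᵥ ((of V)ᵀ *ᵥ u b)

end MomentOperator

theorem exists_integral_dotProduct_self_piKronecker_mulVec_le {N M ι : Type*} [Fintype N]
    [Nonempty N] [Fintype M] [DecidableEq M] [Fintype ι] [DecidableEq ι] [Nonempty ι]
    (μ : Measure (N → M → ℝ)) [IsFiniteMeasure μ] (hμ : ∀ᵐ V ∂μ, V ∈ stiefel N M)
    (S : (ι → N) → ℝ) :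
    ∃ u : N → ℝ, u ⬝ᵥ u = 1 ∧
      ∫ V, (piKronecker (of V)ᵀ *ᵥ S) ⬝ᵥ (piKronecker (of V)ᵀ *ᵥ S) ∂μ
        ≤ (∫ V, √(((of V)ᵀ *ᵥ u) ⬝ᵥ ((of V)ᵀ *ᵥ u)) ^ Fintype.card ι ∂μ) * (S ⬝ᵥ S) := by
  classical
  obtain ⟨lam, t, ht, hAt, hA⟩ :=
    (momentOperator_isHermitian ι μ).exists_eigenvector_forall_dotProduct_mulVec_le
  obtain ⟨u, hu, hut, hu_max⟩ := exists_forall_abs_pureTensor_dotProduct_le ht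
  have hlam : lam ≤ ∫ V, ∏ b, √(((of V)ᵀ *ᵥ u b) ⬝ᵥ ((of V)ᵀ *ᵥ u b)) ∂μ := by
    have h := abs_pureTensor_dotProduct_momentOperator_mulVec_le ι hμ hu_max
    rw [hAt, dotProduct_smul, smul_eq_mul, abs_mul] at h
    -- `λ |p| ≤ |λ| |p|`, so the sign of `λ` plays no role
    exact le_of_mul_le_mul_right
      ((mul_le_mul_of_nonneg_right (le_abs_self lam) (abs_nonneg _)).trans h) (abs_pos.mpr hut)
  have hcont : ∀ b, Continuous fun V : N → M → ℝ => √(((of V)ᵀ *ᵥ u b) ⬝ᵥ ((of V)ᵀ *ᵥ u b)) :=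
    fun b => by simp only [dotProduct, mulVec]; fun_prop
  obtain ⟨b, hb⟩ := exists_integral_prod_le_integral_pow (μ := μ)
    (fun b V => Real.sqrt_nonneg _)
    ((continuous_finsetProd _ fun b _ => hcont b).integrable_of_ae_mem_isCompact
      isCompact_stiefel hμ)
    (fun b => ((hcont b).pow _).integrable_of_ae_mem_isCompact isCompact_stiefel hμ)
  refine ⟨u b, hu b, ?_⟩
  rw [← dotProduct_momentOperator_mulVec ι hμ S]
  exact (hA S).trans (mul_le_mul_of_nonneg_right (hlam.trans hb) (dotProduct_self_nonneg S))

theorem stmt12_general (n m k a : ℕ) (hk : 0 < k) (ha : 0 < a) (hae : Even a)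
    (hmn : m < n)
    (T : (Fin k → Fin n) → ℝ)
    (μ : Measure (Fin n → Fin m → ℝ)) [IsProbabilityMeasure μ]
    (hsupp : ∀ᵐ V ∂μ, ∀ i i' : Fin m,
      ∑ j : Fin n, V j i * V j i' = if i = i' then 1 else 0) :
    ∃ u : Fin n → ℝ, (∑ j, u j ^ 2) = 1 ∧
      (∫ V, Real.sqrt (∑ i : Fin k → Fin m,
          (∑ j : Fin k → Fin n, (∏ b : Fin k, V (j b) (i b)) * T j) ^ 2) ^ a ∂μ)
        ≤ (∫ V, Real.sqrt (∑ i : Fin m, (∑ j : Fin n, V j i * u j) ^ 2) ^ (a * k / 2) ∂μ)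
          * Real.sqrt (∑ j, T j ^ 2) ^ a := by
  obtain ⟨r, rfl⟩ := hae
  have : Nonempty (Fin n) := ⟨⟨0, by omega⟩⟩
  have : Nonempty (Fin r × Fin k) := ⟨(⟨0, by omega⟩, ⟨0, hk⟩)⟩
  have hμ : ∀ᵐ V ∂μ, V ∈ stiefel (Fin n) (Fin m) := by
    filter_upwards [hsupp] with V hV
    ext i i'
    simpa [mul_apply, one_apply] using hV i i'
  obtain ⟨u, hu, hle⟩ :=
    exists_integral_dotProduct_self_piKronecker_mulVec_le μ hμ (tensorPow (Fin r) T)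
  have hcard : (r + r) * k / 2 = Fintype.card (Fin r × Fin k) := by
    rw [Fintype.card_prod, Fintype.card_fin, Fintype.card_fin, ← two_mul, mul_assoc,
      Nat.mul_div_cancel_left _ two_pos]
  refine ⟨u, (sum_sq_eq_dotProduct_self u).trans hu, ?_⟩
  simp only [sum_sq_eq_dotProduct_self, hcard]
  simp only [piKronecker_mulVec_tensorPow, tensorPow_fin_dotProduct_self] at hle
  exact hle

/-- For a k-tensor T on ℝ^n and the rotation-invariant distribution on
n×m matrices V with orthonormal columns, there is a unit vector u with
E[‖(Vᵀ)^{⊗k}T‖₂^a] ≤ E[‖Vᵀu‖₂^{ak/2}] · ‖T‖₂^a (a even). -/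
theorem stmt12 (n m k a : ℕ) (hk : 0 < k) (ha : 0 < a) (hae : Even a)
    (hm : 0 < m) (hmn : m < n)
    (T : (Fin k → Fin n) → ℝ)
    (μ : Measure (Fin n → Fin m → ℝ)) [IsProbabilityMeasure μ]
    (hsupp : ∀ᵐ V ∂μ, ∀ i i' : Fin m,
      ∑ j : Fin n, V j i * V j i' = if i = i' then 1 else 0)
    (hinv : ∀ R : Fin n → Fin n → ℝ,
      (∀ j j' : Fin n, ∑ l : Fin n, R l j * R l j' = if j = j' then 1 else 0) →
      Measure.map (fun V => fun j i => ∑ j' : Fin n, R j j' * V j' i) μ = μ) :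
    ∃ u : Fin n → ℝ, (∑ j, u j ^ 2) = 1 ∧
      (∫ V, Real.sqrt (∑ i : Fin k → Fin m,
          (∑ j : Fin k → Fin n, (∏ b : Fin k, V (j b) (i b)) * T j) ^ 2) ^ a ∂μ)
        ≤ (∫ V, Real.sqrt (∑ i : Fin m, (∑ j : Fin n, V j i * u j) ^ 2) ^ (a * k / 2) ∂μ)
          * Real.sqrt (∑ j, T j ^ 2) ^ a :=
  stmt12_general n m k a hk ha hae hmn T μ hsupp
end
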